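/- (Barrier derivative identity for the Euler-factor tilt.) Fix t ∈ (0,1) and let F(λ) = Cov^t_λ(log h_t, x²). If λ₀ ∈ ℝ satisfies F(λ₀) = 0, then F is differentiable at λ₀ with HasDerivAt F (−Cov^t_{λ₀}((log h_t)², x²)) λ₀, where Cov^t_{λ₀}((log h_t)², x²) = E^t_{λ₀}[(Real.log(h_t(x)))²·x²] − E^t_{λ₀}[(Real.log(h_t(x)))²]·E^t_{λ₀}[x²]. -/

import Mathlib

open intervalIntegral

/-- The Euler-factor polynomial `h_t(x) = 1 − 2tx + t²`. -/
noncomputable def eulerH (t x : ℝ) : ℝ := 1 - 2 * t * x + t ^ 2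

/-- The Euler-factor tilted weight `u_{t,λ}(x) = √(1 − x²)·h_t(x)^{−λ}` on `[-1,1]`. -/
noncomputable def eulerW (t lam x : ℝ) : ℝ := Real.sqrt (1 - x ^ 2) * eulerH t x ^ (-lam)

/-- The normalization constant `Z_t(λ)`. -/
noncomputable def eulerZ (t lam : ℝ) : ℝ := ∫ x in (-1 : ℝ)..1, eulerW t lam x

/-- The mean `E^t_λ[f]` under the Euler-factor tilted semicircle measure. -/
noncomputable def eulerE (t lam : ℝ) (f : ℝ → ℝ) : ℝ :=
  (eulerZ t lam)⁻¹ * ∫ x in (-1 : ℝ)..1, f x * eulerW t lam x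

/-- The covariance `Cov^t_λ(f, g)` under the Euler-factor tilted semicircle measure. -/
noncomputable def eulerCov (t lam : ℝ) (f g : ℝ → ℝ) : ℝ :=
  eulerE t lam (fun x => f x * g x) - eulerE t lam f * eulerE t lam g


/-! The weight `h_t^{-λ} = exp (-λ · log h_t)` is an exponential tilt, so differentiating in `λ`
pulls down `-log h_t`: `∂_λ E_λ[f] = -Cov_λ(log h_t, f)`. Applying this to the three means in
`Cov_λ(log h_t, g)` gives
`∂_λ Cov_λ(log h_t, g) = -Cov_λ((log h_t)², g) + 2 E_λ[log h_t] Cov_λ(log h_t, g)`,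
whose last term vanishes where the covariance does. -/

open Real Set
open scoped Interval

theorem hasDerivAt_intervalIntegral_mul_exp_neg_mul {a b : ℝ} {g L : ℝ → ℝ}
    (hg : ContinuousOn g [[a, b]]) (hL : ContinuousOn L [[a, b]]) (lam₀ : ℝ) :
    HasDerivAt (fun lam => ∫ x in a..b, g x * exp (-lam * L x))
      (-∫ x in a..b, L x * g x * exp (-lam₀ * L x)) lam₀ := by
  have hcont : ∀ lam, ContinuousOn (fun x => g x * exp (-lam * L x)) [[a, b]] := fun lam =>
    hg.mul (continuous_exp.comp_continuousOn (continuousOn_const.mul hL))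
  -- Domination: the `λ`-derivative is bounded on the compact `[λ₀ - 1, λ₀ + 1] × [a, b]`.
  set K := Icc (lam₀ - 1) (lam₀ + 1) ×ˢ [[a, b]]
  have hL₂ : ContinuousOn (fun p : ℝ × ℝ => L p.2) K :=
    hL.comp continuousOn_snd fun _ hp => hp.2
  have hg₂ : ContinuousOn (fun p : ℝ × ℝ => g p.2) K :=
    hg.comp continuousOn_snd fun _ hp => hp.2
  obtain ⟨C, hC⟩ := (isCompact_Icc.prod isCompact_uIcc).exists_bound_of_continuousOn
    (hL₂.mul (hg₂.mul (continuous_exp.comp_continuousOn (continuousOn_fst.neg.mul hL₂)))).neg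
  have hball : Metric.ball lam₀ 1 ⊆ Icc (lam₀ - 1) (lam₀ + 1) :=
    (Real.ball_eq_Ioo lam₀ 1).trans_subset Ioo_subset_Icc_self
  have key := hasDerivAt_integral_of_dominated_loc_of_deriv_le
    (μ := MeasureTheory.volume) (F := fun lam x => g x * exp (-lam * L x))
    (F' := fun lam x => -(L x * (g x * exp (-lam * L x)))) (bound := fun _ => C)
    (Metric.ball_mem_nhds lam₀ one_pos)
    (.of_forall fun lam =>
      ((hcont lam).mono uIoc_subset_uIcc).aestronglyMeasurable measurableSet_uIoc)
    ((hcont lam₀).intervalIntegrable)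
    (((hL.mul (hcont lam₀)).neg.mono uIoc_subset_uIcc).aestronglyMeasurable
      measurableSet_uIoc)
    (.of_forall fun x hx lam hlam => hC (lam, x) ⟨hball hlam, uIoc_subset_uIcc hx⟩)
    intervalIntegrable_const
    (.of_forall fun x _ lam _ =>
      (((hasDerivAt_neg lam).mul_const (L x)).exp.const_mul (g x)).congr_deriv (by ring))
  simpa only [integral_neg, mul_assoc] using key.2

theorem eulerH_pos {t x : ℝ} (ht : t ^ 2 ≠ 1) (hx : x ∈ Icc (-1 : ℝ) 1) :
    0 < eulerH t x := by
  -- `h_t(x) = (t - x)² + (1 - x²)`, and both squares vanish only when `t = x = ±1`.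
  have hx2 : 0 ≤ 1 - x ^ 2 := by nlinarith [hx.1, hx.2]
  by_contra hle
  unfold eulerH at hle
  have hxt : t = x := by nlinarith [sq_nonneg (t - x)]
  subst hxt
  exact ht (by nlinarith)

theorem continuous_eulerH (t : ℝ) : Continuous (eulerH t) := by
  unfold eulerH; fun_prop

theorem continuousOn_log_eulerH {t : ℝ} (ht : t ^ 2 ≠ 1) :
    ContinuousOn (fun x => log (eulerH t x)) (Icc (-1) 1) :=
  (continuous_eulerH t).continuousOn.log fun _ hx => (eulerH_pos ht hx).ne'

theorem continuousOn_eulerW {t : ℝ} (ht : t ^ 2 ≠ 1) (lam : ℝ) :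
    ContinuousOn (eulerW t lam) (Icc (-1) 1) :=
  (continuous_sqrt.comp (by fun_prop)).continuousOn.mul
    ((continuous_eulerH t).continuousOn.rpow_const fun _ hx => .inl (eulerH_pos ht hx).ne')

theorem eulerW_eq_mul_exp {t x : ℝ} (ht : t ^ 2 ≠ 1) (hx : x ∈ Icc (-1 : ℝ) 1) (lam : ℝ) :
    eulerW t lam x = √(1 - x ^ 2) * exp (-lam * log (eulerH t x)) := by
  rw [eulerW, rpow_def_of_pos (eulerH_pos ht hx), mul_comm (log _)]

theorem eulerZ_pos {t : ℝ} (ht : t ^ 2 ≠ 1) (lam : ℝ) : 0 < eulerZ t lam := by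
  refine intervalIntegral_pos_of_pos_on
    ((continuousOn_eulerW ht lam).intervalIntegrable_of_Icc (by norm_num)) (fun x hx => ?_)
    (by norm_num)
  have hx2 : 0 < 1 - x ^ 2 := by nlinarith [hx.1, hx.2]
  rw [eulerW_eq_mul_exp ht (Ioo_subset_Icc_self hx)]
  positivity

theorem hasDerivAt_intervalIntegral_mul_eulerW {t : ℝ} (ht : t ^ 2 ≠ 1) {f : ℝ → ℝ}
    (hf : ContinuousOn f (Icc (-1) 1)) (lam₀ : ℝ) :
    HasDerivAt (fun lam => ∫ x in (-1 : ℝ)..1, f x * eulerW t lam x)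
      (-∫ x in (-1 : ℝ)..1, (log (eulerH t x) * f x) * eulerW t lam₀ x) lam₀ := by
  have hI : [[(-1 : ℝ), 1]] = Icc (-1) 1 := uIcc_of_le (by norm_num)
  have hW : ∀ lam, ∀ x ∈ [[(-1 : ℝ), 1]],
      eulerW t lam x = √(1 - x ^ 2) * exp (-lam * log (eulerH t x)) := fun lam x hx =>
    eulerW_eq_mul_exp ht (hI ▸ hx) lam
  have hg : ContinuousOn (fun x => f x * √(1 - x ^ 2)) [[(-1 : ℝ), 1]] :=
    hI ▸ hf.mul (continuous_sqrt.comp (by fun_prop)).continuousOn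
  refine ((hasDerivAt_intervalIntegral_mul_exp_neg_mul hg (hI ▸ continuousOn_log_eulerH ht)
    lam₀).congr_of_eventuallyEq (.of_forall fun lam => ?_)).congr_deriv ?_
  · exact integral_congr fun x hx => by simp only [hW lam x hx]; ring
  · congr 1
    exact integral_congr fun x hx => by simp only [hW lam₀ x hx]; ring

theorem hasDerivAt_eulerE {t : ℝ} (ht : t ^ 2 ≠ 1) {f : ℝ → ℝ}
    (hf : ContinuousOn f (Icc (-1) 1)) (lam₀ : ℝ) :
    HasDerivAt (fun lam => eulerE t lam f)
      (-eulerCov t lam₀ (fun x => log (eulerH t x)) f) lam₀ := by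
  have hZ : HasDerivAt (fun lam => ∫ x in (-1 : ℝ)..1, eulerW t lam x)
      (-∫ x in (-1 : ℝ)..1, log (eulerH t x) * eulerW t lam₀ x) lam₀ := by
    simpa only [one_mul, mul_one] using
      hasDerivAt_intervalIntegral_mul_eulerW ht (f := fun _ => 1) continuousOn_const lam₀
  have hZ₀ : eulerZ t lam₀ ≠ 0 := (eulerZ_pos ht lam₀).ne'
  refine ((hZ.inv hZ₀).mul (hasDerivAt_intervalIntegral_mul_eulerW ht hf lam₀)).congr_deriv ?_
  simp only [eulerCov, eulerE, eulerZ, Pi.inv_apply] at hZ₀ ⊢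
  field_simp
  ring

theorem hasDerivAt_eulerCov_log {t : ℝ} (ht : t ^ 2 ≠ 1) {g : ℝ → ℝ}
    (hg : ContinuousOn g (Icc (-1) 1)) (lam₀ : ℝ) :
    HasDerivAt (fun lam => eulerCov t lam (fun x => log (eulerH t x)) g)
      (-eulerCov t lam₀ (fun x => log (eulerH t x) ^ 2) g
        + 2 * eulerE t lam₀ (fun x => log (eulerH t x))
          * eulerCov t lam₀ (fun x => log (eulerH t x)) g) lam₀ := by
  have hL := continuousOn_log_eulerH ht
  refine ((hasDerivAt_eulerE ht (f := fun x => log (eulerH t x) * g x) (hL.mul hg) lam₀).sub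
    ((hasDerivAt_eulerE ht hL lam₀).mul (hasDerivAt_eulerE ht hg lam₀))).congr_deriv ?_
  have hL2g : (fun x => log (eulerH t x) * (log (eulerH t x) * g x))
      = fun x => log (eulerH t x) ^ 2 * g x := by funext x; ring
  have hL2 : (fun x => log (eulerH t x) * log (eulerH t x)) = fun x => log (eulerH t x) ^ 2 := by
    funext x; ring
  simp only [eulerCov, hL2g, hL2]
  ring

/-- Barrier derivative identity for the Euler-factor tilt: if
`F(λ) = Cov^t_λ(log h_t, x²)` vanishes at `λ₀`, then `F` is differentiable at
`λ₀` with derivative `−Cov^t_{λ₀}((log h_t)², x²)`. -/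
theorem eulerCov_barrier_deriv (t : ℝ) (ht0 : 0 < t) (ht1 : t < 1) (lam₀ : ℝ)
    (hzero : eulerCov t lam₀ (fun x => Real.log (eulerH t x)) (fun x => x ^ 2) = 0) :
    HasDerivAt (fun lam => eulerCov t lam (fun x => Real.log (eulerH t x)) (fun x => x ^ 2))
      (-(eulerCov t lam₀ (fun x => (Real.log (eulerH t x)) ^ 2) (fun x => x ^ 2))) lam₀ := by
  have ht : t ^ 2 ≠ 1 := (by nlinarith : t ^ 2 < 1).ne
  simpa only [hzero, mul_zero, add_zero] using
    hasDerivAt_eulerCov_log ht (continuous_pow 2).continuousOn lam₀
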